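/- arXiv:2211.05766 — 5 statements merged into one kernel-verified Lean document; each statement's English description precedes it below -/
import Mathlib

section
/- Fix an integer k ≥ 2 and a real σ > 0, and let ε > 0. If σ ≥ (k−1)/(kε), then the discrete exponential randomized-response mechanism satisfies ε-local differential privacy: for all t, t', u ∈ {1,…,k}, P_σ(t,u) ≤ e^ε · P_σ(t',u). -/
/-- Unnormalized weight of the discrete exponential randomized-response
mechanism on `{1,…,k}`: `Q_σ(t,u) = exp(−|u−t|/(kσ))`. -/
noncomputable def rrWeight (k : ℕ) (σ : ℝ) (t u : ℕ) : ℝ :=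
  Real.exp (-|(u : ℝ) - (t : ℝ)| / (k * σ))

/-- Normalizer `C_σ(t) = Σ_{v=1}^k exp(−|v−t|/(kσ))`. -/
noncomputable def rrNorm (k : ℕ) (σ : ℝ) (t : ℕ) : ℝ :=
  ∑ v ∈ Finset.Icc 1 k, rrWeight k σ t v

/-- Randomization probability `P_σ(t,u) = Q_σ(t,u) / C_σ(t)`. -/
noncomputable def rrProb (k : ℕ) (σ : ℝ) (t u : ℕ) : ℝ :=
  rrWeight k σ t u / rrNorm k σ t

/-!
With `r = exp (-1/(kσ)) ≤ 1`, the weights are `r ^ |u - t|`, so every normalizer is a sum of `k`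
powers of `r`. Since `r` is decreasing in the exponent, the normalizer is smallest at an endpoint,
where it is `S = ∑_{i<k} r ^ i`; hence `P(t,u) ≤ 1/S`. On the other side, if `m` is the distance
from `t'` to the nearer endpoint, then `r ^ m` times the normalizer at `t'` is at most `S`, and
`|u - t'| + m ≤ k - 1`, so `P(t',u) ≥ r ^ (k-1) / S`. The condition on `σ` says exactly that
`e^ε r ^ (k-1) ≥ 1`.
-/

open Finset

theorem sum_range_comp_dist {M : Type*} [AddCommMonoid M] (f : ℕ → M) (s n : ℕ) :
    ∑ i ∈ range (s + 1 + n), f (Nat.dist i s) =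
      ∑ i ∈ range (s + 1), f i + ∑ i ∈ range n, f (i + 1) := by
  rw [sum_range_add, ← sum_range_reflect f]
  congr 1 <;> refine sum_congr rfl fun i hi => congrArg f ?_ <;> simp only [mem_range] at hi <;>
    simp only [Nat.dist] <;> omega

theorem sum_range_comp_dist_reflect {M : Type*} [AddCommMonoid M] (f : ℕ → M) {k s : ℕ}
    (hs : s < k) :
    ∑ i ∈ range k, f (Nat.dist i (k - 1 - s)) = ∑ i ∈ range k, f (Nat.dist i s) := by
  rw [← sum_range_reflect]
  refine sum_congr rfl fun i hi => congrArg f ?_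
  simp only [mem_range] at hi
  simp only [Nat.dist]
  omega

section Antitone

variable {M : Type*} [AddCommMonoid M] [PartialOrder M] [IsOrderedAddMonoid M]
  {f : ℕ → M} {k s : ℕ}

theorem Antitone.sum_range_le_sum_range_comp_dist (hf : Antitone f) (hs : s < k) :
    ∑ i ∈ range k, f i ≤ ∑ i ∈ range k, f (Nat.dist i s) := by
  obtain ⟨n, rfl⟩ : ∃ n, k = s + 1 + n := ⟨k - (s + 1), by omega⟩
  rw [sum_range_comp_dist, sum_range_add f (s + 1) n]
  exact add_le_add_right (sum_le_sum fun i _ => hf (by omega)) _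

theorem Antitone.sum_range_comp_dist_add_le (hf : Antitone f) (hs : s < k) {m : ℕ}
    (hm : min s (k - 1 - s) ≤ m) :
    ∑ i ∈ range k, f (Nat.dist i s + m) ≤ ∑ i ∈ range k, f i := by
  wlog hsm : s ≤ m generalizing s
  · rw [← sum_range_comp_dist_reflect (fun d => f (d + m)) hs]
    exact this (by omega) (by omega) (by omega)
  obtain ⟨n, rfl⟩ : ∃ n, k = s + 1 + n := ⟨k - (s + 1), by omega⟩
  rw [sum_range_comp_dist (fun d => f (d + m)), sum_range_add f (s + 1) n]
  exact add_le_add (sum_le_sum fun i _ => hf (by omega)) (sum_le_sum fun i _ => hf (by omega))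

end Antitone

theorem pow_mul_pow_dist_div_sum_le {r : ℝ} (hr0 : 0 ≤ r) (hr1 : r ≤ 1) {k s s' j : ℕ}
    (hs : s < k) (hs' : s' < k) (hj : j < k) :
    r ^ (k - 1) * (r ^ Nat.dist j s / ∑ i ∈ range k, r ^ Nat.dist i s) ≤
      r ^ Nat.dist j s' / ∑ i ∈ range k, r ^ Nat.dist i s' := by
  have hanti : Antitone (r ^ · : ℕ → ℝ) := fun _ _ h => pow_le_pow_of_le_one hr0 hr1 h
  set S := ∑ i ∈ range k, r ^ i
  have hS : 0 < S := one_pos.trans_le <| by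
    simpa using single_le_sum (fun i _ => pow_nonneg hr0 i) (mem_range.2 (Nat.zero_lt_of_lt hs))
  have hZ : S ≤ ∑ i ∈ range k, r ^ Nat.dist i s := hanti.sum_range_le_sum_range_comp_dist hs
  have hZ' : 0 < ∑ i ∈ range k, r ^ Nat.dist i s' :=
    hS.trans_le (hanti.sum_range_le_sum_range_comp_dist hs')
  set m := min s' (k - 1 - s')
  have hmZ : r ^ m * ∑ i ∈ range k, r ^ Nat.dist i s' ≤ S := by
    simpa only [mul_sum, ← pow_add, add_comm m] using hanti.sum_range_comp_dist_add_le hs' le_rfl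
  calc r ^ (k - 1) * (r ^ Nat.dist j s / ∑ i ∈ range k, r ^ Nat.dist i s)
      ≤ r ^ (Nat.dist j s' + m) * (1 / S) := by
        refine mul_le_mul (hanti ?_) ?_ (by positivity) (by positivity)
        · simp only [Nat.dist, m]
          omega
        · gcongr
          exact pow_le_one₀ hr0 hr1
    _ ≤ r ^ Nat.dist j s' / ∑ i ∈ range k, r ^ Nat.dist i s' := by
        rw [mul_one_div, div_le_div_iff₀ hS hZ', pow_add, mul_assoc]
        gcongr

theorem rrWeight_eq_pow (k : ℕ) (σ : ℝ) (t u : ℕ) :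
    rrWeight k σ t u = Real.exp (-(k * σ)⁻¹) ^ Nat.dist u t := by
  have hdist : |(u : ℝ) - t| = Nat.dist u t := by
    rcases le_total t u with h | h
    · rw [Nat.dist_eq_sub_of_le_right h, Nat.cast_sub h, abs_of_nonneg (by simpa using h)]
    · rw [Nat.dist_eq_sub_of_le h, Nat.cast_sub h, abs_of_nonpos (by simpa using h), neg_sub]
  rw [rrWeight, ← Real.exp_nat_mul, hdist, neg_div, div_eq_mul_inv, mul_neg]

theorem rrProb_succ_succ (k : ℕ) (σ : ℝ) (t u : ℕ) :
    rrProb k σ (t + 1) (u + 1) = Real.exp (-(k * σ)⁻¹) ^ Nat.dist u t /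
      ∑ i ∈ range k, Real.exp (-(k * σ)⁻¹) ^ Nat.dist i t := by
  rw [rrProb, rrNorm, ← Ico_add_one_right_eq_Icc, sum_Ico_eq_sum_range, Nat.add_sub_cancel]
  simp only [rrWeight_eq_pow, add_comm 1, Nat.dist_succ_succ]

theorem one_le_exp_mul_exp_pow {k : ℕ} (hk : 1 ≤ k) {σ ε : ℝ} (hε : 0 < ε)
    (hσε : σ ≥ ((k : ℝ) - 1) / (k * ε)) :
    1 ≤ Real.exp ε * Real.exp (-(k * σ)⁻¹) ^ (k - 1) := by
  have hk' : (1 : ℝ) ≤ k := by exact_mod_cast hk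
  rw [← Real.exp_nat_mul, ← Real.exp_add, Real.one_le_exp_iff, Nat.cast_sub hk, Nat.cast_one]
  rcases le_or_gt σ 0 with hσ | hσ
  · have : (k * σ)⁻¹ ≤ 0 := inv_nonpos.2 (mul_nonpos_of_nonneg_of_nonpos (by linarith) hσ)
    nlinarith
  · rw [ge_iff_le, div_le_iff₀ (by positivity)] at hσε
    have : ((k : ℝ) - 1) * (k * σ)⁻¹ ≤ ε := by
      rw [← div_eq_mul_inv, div_le_iff₀ (by positivity)]
      linarith
    linarith

theorem rr_ldp_general (k : ℕ) (σ ε : ℝ) (hε : 0 < ε)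
    (hσε : σ ≥ ((k : ℝ) - 1) / (k * ε)) :
    ∀ t ∈ Finset.Icc 1 k, ∀ t' ∈ Finset.Icc 1 k, ∀ u ∈ Finset.Icc 1 k,
      rrProb k σ t u ≤ Real.exp ε * rrProb k σ t' u := by
  intro t ht t' ht' u hu
  simp only [mem_Icc] at ht ht' hu
  obtain ⟨s, rfl⟩ : ∃ s, t = s + 1 := ⟨t - 1, by omega⟩
  obtain ⟨s', rfl⟩ : ∃ s', t' = s' + 1 := ⟨t' - 1, by omega⟩
  obtain ⟨j, rfl⟩ : ∃ j, u = j + 1 := ⟨u - 1, by omega⟩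
  have hσ : 0 ≤ σ :=
    hσε.trans' <| div_nonneg (sub_nonneg.2 (by exact_mod_cast ht.1.trans ht.2)) (by positivity)
  have hr1 : Real.exp (-(k * σ)⁻¹) ≤ 1 := Real.exp_le_one_iff.2 (neg_nonpos.2 (by positivity))
  rw [rrProb_succ_succ, rrProb_succ_succ]
  calc _ ≤ (Real.exp ε * Real.exp (-(k * σ)⁻¹) ^ (k - 1)) * _ :=
        le_mul_of_one_le_left (by positivity) (one_le_exp_mul_exp_pow (by omega) hε hσε)
    _ ≤ _ := by
        rw [mul_assoc]
        gcongr
        exact pow_mul_pow_dist_div_sum_le (Real.exp_pos _).le hr1 (by omega) (by omega) (by omega)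

/-- if `σ ≥ (k−1)/(kε)` then the mechanism satisfies `ε`-LDP:
`P_σ(t,u) ≤ e^ε · P_σ(t',u)` for all `t, t', u ∈ {1,…,k}`. -/
theorem rr_ldp (k : ℕ) (hk : 2 ≤ k) (σ ε : ℝ) (hσ : 0 < σ) (hε : 0 < ε)
    (hσε : σ ≥ ((k : ℝ) - 1) / (k * ε)) :
    ∀ t ∈ Finset.Icc 1 k, ∀ t' ∈ Finset.Icc 1 k, ∀ u ∈ Finset.Icc 1 k,
      rrProb k σ t u ≤ Real.exp ε * rrProb k σ t' u :=
  rr_ldp_general k σ ε hε hσε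
end

section
/- Fix an integer k ≥ 2, a dimension d ≥ 1, a privacy budget ε > 0, and weights θ_1,…,θ_d > 0 with Σ_{i=1}^d θ_i = 1. Suppose for each i the noise scale σ_i satisfies σ_i ≥ (k−1)/(k ε θ_i). Then the product mechanism that randomizes each coordinate independently satisfies ε-local differential privacy: for all vectors t, t', u ∈ {1,…,k}^d, Π_{i=1}^d P_{σ_i}(t_i, u_i) ≤ e^ε · Π_{i=1}^d P_{σ_i}(t'_i, u_i). -/
/-!
Per coordinate, the triangle inequality gives `Q(t,u) ≤ exp(|t−t'|/(kσ)) Q(t',u)`. The normalizer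
is invariant under the reflection `t ↦ k+1−t`, and the reflection of `t'` lies within
`k−1−|t−t'|` of `t`, so `C(t') ≤ exp((k−1−|t−t'|)/(kσ)) C(t)`. Together each coordinate costs at
most `(k−1)/(kσ_i) ≤ εθ_i`, and these costs add up to `ε`.
-/

open Finset Real

lemma rrWeight_pos (k : ℕ) (σ : ℝ) (t u : ℕ) : 0 < rrWeight k σ t u :=
  exp_pos _

lemma rrNorm_pos {k : ℕ} (hk : 1 ≤ k) (σ : ℝ) (t : ℕ) : 0 < rrNorm k σ t :=
  sum_pos (fun v _ => rrWeight_pos k σ t v) (nonempty_Icc.mpr hk)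

lemma rrProb_nonneg (k : ℕ) (σ : ℝ) (t u : ℕ) : 0 ≤ rrProb k σ t u :=
  div_nonneg (rrWeight_pos k σ t u).le (sum_nonneg fun v _ => (rrWeight_pos k σ t v).le)

lemma rrWeight_le_exp_mul_rrWeight {k : ℕ} {σ : ℝ} (hkσ : 0 < k * σ) (t t' u : ℕ) :
    rrWeight k σ t u ≤ exp (|(t : ℝ) - t'| / (k * σ)) * rrWeight k σ t' u := by
  rw [rrWeight, rrWeight, ← exp_add, exp_le_exp, ← add_div, div_le_div_iff_of_pos_right hkσ]
  linarith [abs_sub_le (u : ℝ) t t']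

lemma rrWeight_reflect {k t v : ℕ} (σ : ℝ) (ht : t ≤ k + 1) (hv : v ≤ k + 1) :
    rrWeight k σ (k + 1 - t) v = rrWeight k σ t (k + 1 - v) := by
  rw [rrWeight, rrWeight, Nat.cast_sub ht, Nat.cast_sub hv, abs_sub_comm]
  ring_nf

lemma rrNorm_reflect {k t : ℕ} (σ : ℝ) (ht : t ≤ k + 1) :
    rrNorm k σ (k + 1 - t) = rrNorm k σ t := by
  refine sum_nbij' (fun v => k + 1 - v) (fun v => k + 1 - v) ?_ ?_ ?_ ?_ ?_ <;>
    intro v hv <;> simp only [mem_Icc] at hv ⊢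
  any_goals omega
  exact rrWeight_reflect σ ht (by omega)

lemma abs_reflect_sub_le {k t t' : ℝ} (ht₁ : 1 ≤ t) (ht₂ : t ≤ k) (ht'₁ : 1 ≤ t')
    (ht'₂ : t' ≤ k) : |k + 1 - t' - t| ≤ k - 1 - |t - t'| := by
  rcases abs_cases (t - t') with ⟨h, _⟩ | ⟨h, _⟩ <;> rw [h, abs_le] <;> constructor <;> linarith

lemma rrNorm_le_exp_mul_rrNorm {k t t' : ℕ} {σ : ℝ} (hσ : 0 < σ) (ht : t ∈ Icc 1 k)
    (ht' : t' ∈ Icc 1 k) :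
    rrNorm k σ t' ≤ exp ((k - 1 - |(t : ℝ) - t'|) / (k * σ)) * rrNorm k σ t := by
  rw [mem_Icc] at ht ht'
  have hkσ : 0 < (k : ℝ) * σ := by
    have : (0 : ℝ) < k := by exact_mod_cast (by omega : 0 < k)
    positivity
  rw [← rrNorm_reflect σ (by omega : t' ≤ k + 1), rrNorm, rrNorm, mul_sum]
  gcongr with v
  refine (rrWeight_le_exp_mul_rrWeight hkσ _ t v).trans ?_
  refine mul_le_mul_of_nonneg_right ?_ (rrWeight_pos k σ t v).le
  gcongr
  rw [Nat.cast_sub (by omega : t' ≤ k + 1)]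
  push_cast
  exact abs_reflect_sub_le (by exact_mod_cast ht.1) (by exact_mod_cast ht.2)
    (by exact_mod_cast ht'.1) (by exact_mod_cast ht'.2)

lemma rrProb_le_exp_mul_rrProb {k t t' : ℕ} {σ : ℝ} (hσ : 0 < σ) (ht : t ∈ Icc 1 k)
    (ht' : t' ∈ Icc 1 k) (u : ℕ) :
    rrProb k σ t u ≤ exp ((k - 1) / (k * σ)) * rrProb k σ t' u := by
  have hk : 1 ≤ k := (mem_Icc.mp ht).1.trans (mem_Icc.mp ht).2
  have hkσ : 0 < (k : ℝ) * σ := by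
    have : (0 : ℝ) < k := by exact_mod_cast hk
    positivity
  set a := |(t : ℝ) - t'|
  rw [rrProb, rrProb, mul_div_assoc', div_le_div_iff₀ (rrNorm_pos hk σ t) (rrNorm_pos hk σ t')]
  calc rrWeight k σ t u * rrNorm k σ t'
      ≤ (exp (a / (k * σ)) * rrWeight k σ t' u) *
          (exp ((k - 1 - a) / (k * σ)) * rrNorm k σ t) :=
        mul_le_mul (rrWeight_le_exp_mul_rrWeight hkσ t t' u) (rrNorm_le_exp_mul_rrNorm hσ ht ht')
          (rrNorm_pos hk σ t').le (mul_pos (exp_pos _) (rrWeight_pos k σ t' u)).le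
    _ = exp ((k - 1) / (k * σ)) * rrWeight k σ t' u * rrNorm k σ t := by
        rw [show ((k : ℝ) - 1) / (k * σ) = a / (k * σ) + (k - 1 - a) / (k * σ) by ring, exp_add]
        ring

lemma rrProb_le_exp_mul_rrProb_of_le {k t t' : ℕ} {σ η : ℝ} (hη : 0 < η) (hσ : 0 < σ)
    (hση : ((k : ℝ) - 1) / (k * η) ≤ σ) (ht : t ∈ Icc 1 k) (ht' : t' ∈ Icc 1 k) (u : ℕ) :
    rrProb k σ t u ≤ exp η * rrProb k σ t' u := by
  have hk : (0 : ℝ) < k := by exact_mod_cast (mem_Icc.mp ht).1.trans (mem_Icc.mp ht).2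
  refine (rrProb_le_exp_mul_rrProb hσ ht ht' u).trans ?_
  refine mul_le_mul_of_nonneg_right ?_ (rrProb_nonneg k σ t' u)
  gcongr
  rw [div_le_iff₀ (by positivity)]
  linarith [(div_le_iff₀ (by positivity)).mp hση]

theorem rr_product_ldp_general (k : ℕ) (d : ℕ)
    (ε : ℝ) (hε : 0 < ε)
    (θ : Fin d → ℝ) (hθpos : ∀ i, 0 < θ i) (hθsum : ∑ i, θ i = 1)
    (σ : Fin d → ℝ) (hσpos : ∀ i, 0 < σ i)
    (hσ : ∀ i, σ i ≥ ((k : ℝ) - 1) / (k * ε * θ i))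
    (t t' u : Fin d → ℕ)
    (ht : ∀ i, t i ∈ Finset.Icc 1 k) (ht' : ∀ i, t' i ∈ Finset.Icc 1 k) :
    ∏ i, rrProb k (σ i) (t i) (u i) ≤
      Real.exp ε * ∏ i, rrProb k (σ i) (t' i) (u i) := by
  have hcoord (i : Fin d) :
      rrProb k (σ i) (t i) (u i) ≤ exp (ε * θ i) * rrProb k (σ i) (t' i) (u i) :=
    rrProb_le_exp_mul_rrProb_of_le (mul_pos hε (hθpos i)) (hσpos i)
      ((hσ i).trans_eq' (by rw [mul_assoc])) (ht i) (ht' i) (u i)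
  calc ∏ i, rrProb k (σ i) (t i) (u i)
      ≤ ∏ i, (exp (ε * θ i) * rrProb k (σ i) (t' i) (u i)) :=
        prod_le_prod (fun i _ => rrProb_nonneg _ _ _ _) (fun i _ => hcoord i)
    _ = exp ε * ∏ i, rrProb k (σ i) (t' i) (u i) := by
        rw [prod_mul_distrib, ← exp_sum, ← mul_sum, hθsum, mul_one]

/-- the product mechanism with per-coordinate noise scales
`σ_i ≥ (k−1)/(kεθ_i)`, where `θ_i > 0` and `Σ_i θ_i = 1`, satisfies `ε`-LDP:
`Π_i P_{σ_i}(t_i,u_i) ≤ e^ε · Π_i P_{σ_i}(t'_i,u_i)`. -/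
theorem rr_product_ldp (k : ℕ) (hk : 2 ≤ k) (d : ℕ) (hd : 1 ≤ d)
    (ε : ℝ) (hε : 0 < ε)
    (θ : Fin d → ℝ) (hθpos : ∀ i, 0 < θ i) (hθsum : ∑ i, θ i = 1)
    (σ : Fin d → ℝ) (hσpos : ∀ i, 0 < σ i)
    (hσ : ∀ i, σ i ≥ ((k : ℝ) - 1) / (k * ε * θ i))
    (t t' u : Fin d → ℕ)
    (ht : ∀ i, t i ∈ Finset.Icc 1 k) (ht' : ∀ i, t' i ∈ Finset.Icc 1 k)
    (hu : ∀ i, u i ∈ Finset.Icc 1 k) :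
    ∏ i, rrProb k (σ i) (t i) (u i) ≤
      Real.exp ε * ∏ i, rrProb k (σ i) (t' i) (u i) :=
  rr_product_ldp_general k d ε hε θ hθpos hθsum σ hσpos hσ t t' u ht ht'
end

section
/- Fix an integer k ≥ 2 and a real σ > 0. The normalizer C_σ(t) is larger for inputs t closer to the center of {1,…,k}: for t, t' ∈ {1,…,k}, if |2t − (k+1)| ≤ |2t' − (k+1)| then C_σ(t) ≥ C_σ(t'). -/
/-! With `c = 1/(kσ)` and `r = exp (-c)`, the weight `Q_σ(t,v)` is `r ^ |v - t|`, so the two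
geometric series on either side of `t` give `(1 - r) C_σ(t) = 1 + r - (r ^ t + r ^ (k + 1 - t))`.
The subtracted pair is `2 exp (-(k + 1) c / 2) cosh ((2t - (k + 1)) c / 2)`, and `cosh` grows
with the absolute value of its argument. -/

open Finset Real

theorem Nat.cast_dist {R : Type*} [Ring R] [LinearOrder R] [IsStrictOrderedRing R] (m n : ℕ) :
    (Nat.dist m n : R) = |(m : R) - n| := by
  rcases le_total m n with h | h
  · rw [Nat.dist_eq_sub_of_le h, Nat.cast_sub h, abs_sub_comm, abs_of_nonneg (by simpa)]
  · rw [Nat.dist_eq_sub_of_le_right h, Nat.cast_sub h, abs_of_nonneg (by simpa)]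

theorem one_sub_mul_sum_Icc_pow_dist {R : Type*} [CommRing R] (x : R) {k t : ℕ} (htk : t ≤ k) :
    (1 - x) * ∑ v ∈ Icc 1 k, x ^ Nat.dist v t = 1 + x - x ^ t - x ^ (k + 1 - t) := by
  have below : ∑ v ∈ Ioc 0 t, x ^ Nat.dist v t = ∑ i ∈ range t, x ^ i := by
    refine sum_nbij' (fun v => t - v) (fun i => t - i) ?_ ?_ ?_ ?_ ?_ <;>
      simp only [mem_Ioc, mem_range] <;> try omega
    intro v hv
    rw [Nat.dist_eq_sub_of_le hv.2]
  have above : ∑ v ∈ Ioc t k, x ^ Nat.dist v t = x * ∑ i ∈ range (k - t), x ^ i := by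
    rw [mul_sum]
    refine sum_nbij' (fun v => v - t - 1) (fun i => i + t + 1) ?_ ?_ ?_ ?_ ?_ <;>
      simp only [mem_Ioc, mem_range] <;> try omega
    intro v hv
    rw [Nat.dist_eq_sub_of_le_right hv.1.le, ← pow_succ', show v - t - 1 + 1 = v - t by omega]
  rw [show Icc 1 k = Ioc 0 k from Icc_add_one_left_eq_Ioc 0 k,
    ← sum_Ioc_consecutive _ (Nat.zero_le t) htk, below, above, mul_add, mul_left_comm,
    mul_neg_geom_sum, mul_neg_geom_sum, show k + 1 - t = k - t + 1 by omega,
    pow_succ']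
  ring

theorem exp_neg_mul_add_exp_neg_mul_le {a c s s' : ℝ} (h : |2 * s - a| ≤ |2 * s' - a|) :
    exp (-(s * c)) + exp (-((a - s) * c)) ≤ exp (-(s' * c)) + exp (-((a - s') * c)) := by
  have pair_eq_cosh (u : ℝ) :
      exp (-(u * c)) + exp (-((a - u) * c)) =
        2 * exp (-(a * c / 2)) * cosh ((2 * u - a) * c / 2) := by
    rw [cosh_eq, mul_comm 2, mul_assoc, mul_div_cancel₀ _ two_ne_zero, mul_add, ← exp_add,
      ← exp_add]
    ring_nf
  rw [pair_eq_cosh, pair_eq_cosh]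
  gcongr
  rw [cosh_le_cosh, abs_div, abs_div, abs_mul, abs_mul]
  gcongr

theorem rrWeight_eq_pow_dist (k : ℕ) (σ : ℝ) (t v : ℕ) :
    rrWeight k σ t v = exp (-(k * σ)⁻¹) ^ Nat.dist v t := by
  rw [rrWeight, ← exp_nat_mul, Nat.cast_dist, div_eq_mul_inv, neg_mul, mul_neg]

theorem one_sub_mul_rrNorm {k t : ℕ} (σ : ℝ) (htk : t ≤ k) :
    (1 - exp (-(k * σ)⁻¹)) * rrNorm k σ t =
      1 + exp (-(k * σ)⁻¹) -
        (exp (-(t * (k * σ)⁻¹)) + exp (-((k + 1 - t) * (k * σ)⁻¹))) := by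
  simp only [rrNorm, rrWeight_eq_pow_dist]
  rw [one_sub_mul_sum_Icc_pow_dist _ htk, ← exp_nat_mul, ← exp_nat_mul,
    Nat.cast_sub (by omega), Nat.cast_add_one]
  ring_nf

theorem rr_norm_center_max_general (k : ℕ) (σ : ℝ) (hσ : 0 < σ) :
    ∀ t ∈ Finset.Icc 1 k, ∀ t' ∈ Finset.Icc 1 k,
      |2 * (t : ℝ) - ((k : ℝ) + 1)| ≤ |2 * (t' : ℝ) - ((k : ℝ) + 1)| →
        rrNorm k σ t ≥ rrNorm k σ t' := by
  intro t ht t' ht' hle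
  rw [Finset.mem_Icc] at ht ht'
  have hk : (0 : ℝ) < k := by exact_mod_cast ht.1.trans ht.2
  have hr : exp (-(k * σ)⁻¹) < 1 := exp_lt_one_iff.mpr (neg_neg_of_pos (by positivity))
  refine le_of_mul_le_mul_left ?_ (sub_pos.mpr hr)
  rw [one_sub_mul_rrNorm σ ht.2, one_sub_mul_rrNorm σ ht'.2]
  exact sub_le_sub_left (exp_neg_mul_add_exp_neg_mul_le hle) _

/-- the normalizer `C_σ(t)` is larger for inputs `t` closer to
the center of `{1,…,k}`: if `|2t − (k+1)| ≤ |2t' − (k+1)|` then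
`C_σ(t) ≥ C_σ(t')`. -/
theorem rr_norm_center_max (k : ℕ) (hk : 2 ≤ k) (σ : ℝ) (hσ : 0 < σ) :
    ∀ t ∈ Finset.Icc 1 k, ∀ t' ∈ Finset.Icc 1 k,
      |2 * (t : ℝ) - ((k : ℝ) + 1)| ≤ |2 * (t' : ℝ) - ((k : ℝ) + 1)| →
        rrNorm k σ t ≥ rrNorm k σ t' :=
  rr_norm_center_max_general k σ hσ
end

section
/- (Global sensitivity bound for the HRG log-likelihood.) Let N ≥ 2 be an integer and let e be an integer with 1 ≤ e ≤ N. Then |N·χ(e/N) − N·χ((e−1)/N)| ≤ log N + (N−1)·log(N/(N−1)). That is, changing the edge count at an internal node by one changes the log-likelihood term N·χ(e/N) by at most Δ(N). -/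
/-- `χ(τ) = τ log τ + (1−τ) log(1−τ)` (natural log, with `0·log 0 = 0`
via Mathlib's `Real.log 0 = 0`). -/
noncomputable def chi (τ : ℝ) : ℝ := τ * Real.log τ + (1 - τ) * Real.log (1 - τ)

/-- `Δ(N) = log N + (N−1)·log(N/(N−1))` for real `N > 1`. -/
noncomputable def Δ (N : ℝ) : ℝ := Real.log N + (N - 1) * Real.log (N / (N - 1))

private lemma mul_log_div' (a b : ℝ) (ha : 0 ≤ a) (hb : 0 < b) :
    a * Real.log (a / b) = a * Real.log a - a * Real.log b := by
  rcases ha.eq_or_lt with h | h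
  · simp [← h]
  · rw [Real.log_div h.ne' hb.ne']; ring

private lemma phi_slope_nonneg (k : ℝ) (hk : 1 ≤ k) :
    0 ≤ k * Real.log k - (k - 1) * Real.log (k - 1) := by
  rcases hk.eq_or_lt with h | h
  · simp [← h]
  · have h0 : 0 < k - 1 := by linarith
    have h1 : Real.log (k - 1) ≤ Real.log k := Real.log_le_log h0 (by linarith)
    have h2 : 0 ≤ Real.log k := Real.log_nonneg hk
    nlinarith [h0.le]

private lemma phi_slope_le (k N : ℝ) (hk : 1 ≤ k) (hkN : k ≤ N) :
    k * Real.log k - (k - 1) * Real.log (k - 1)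
      ≤ N * Real.log N - (N - 1) * Real.log (N - 1) := by
  rcases hkN.eq_or_lt with h | h
  · rw [h]
  · set f : ℝ → ℝ := fun x => x * Real.log x with hf
    have hk1 : (0:ℝ) ≤ k - 1 := by linarith
    have hmk1 : k - 1 ∈ Set.Ici (0:ℝ) := hk1
    have hmk : k ∈ Set.Ici (0:ℝ) := by simp; linarith
    have hmN : N ∈ Set.Ici (0:ℝ) := by simp; linarith
    have hmN1 : N - 1 ∈ Set.Ici (0:ℝ) := by simp; linarith
    have h1 := Real.convexOn_mul_log.secant_mono (a := k - 1) (x := k) (y := N)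
      hmk1 hmk hmN (by intro hh; linarith [hh]) (by intro hh; linarith [hh]) hkN
    have h2 := Real.convexOn_mul_log.secant_mono (a := N) (x := k - 1) (y := N - 1)
      hmN hmk1 hmN1 (by intro hh; linarith [hh]) (by intro hh; linarith [hh]) (by linarith)
    rw [show k - (k - 1) = 1 by ring, div_one] at h1
    rw [show N - 1 - N = -1 by ring, div_neg, div_one] at h2
    have heq : (f (k - 1) - f N) / (k - 1 - N) = (f N - f (k - 1)) / (N - (k - 1)) := by
      rw [← neg_div_neg_eq]; ring_nf
    rw [heq] at h2
    calc f k - f (k - 1) ≤ (f N - f (k - 1)) / (N - (k - 1)) := h1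
      _ ≤ -(f (N - 1) - f N) := h2
      _ = N * Real.log N - (N - 1) * Real.log (N - 1) := by simp only [hf]; ring

/-- global sensitivity bound for the HRG log-likelihood:
for integers `N ≥ 2` and `1 ≤ e ≤ N`,
`|N·χ(e/N) − N·χ((e−1)/N)| ≤ log N + (N−1)·log(N/(N−1))`. -/
theorem hrg_sensitivity_bound (N e : ℕ) (hN : 2 ≤ N) (he1 : 1 ≤ e) (heN : e ≤ N) :
    |(N : ℝ) * chi ((e : ℝ) / N) - (N : ℝ) * chi (((e : ℝ) - 1) / N)| ≤ Δ N := by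
  have hN1 : (1:ℝ) < N := by exact_mod_cast hN
  have hN0 : (0:ℝ) < N := by linarith
  have he1' : (1:ℝ) ≤ e := by exact_mod_cast he1
  have heN' : (e:ℝ) ≤ N := by exact_mod_cast heN
  -- key identity: N * chi (x/N) = x log x + (N-x) log (N-x) - N log N
  have key : ∀ x : ℝ, 0 ≤ x → x ≤ N →
      (N:ℝ) * chi (x / N) =
        x * Real.log x + ((N:ℝ) - x) * Real.log ((N:ℝ) - x) - (N:ℝ) * Real.log N := by
    intro x hx0 hxN
    have h1 : (1:ℝ) - x / N = ((N:ℝ) - x) / N := by field_simp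
    unfold chi
    rw [h1, show (N:ℝ) * (x / N * Real.log (x / N) + ((N:ℝ) - x) / N * Real.log (((N:ℝ) - x) / N))
        = x * Real.log (x / N) + ((N:ℝ) - x) * Real.log (((N:ℝ) - x) / N) from by
      field_simp,
      mul_log_div' x N hx0 hN0, mul_log_div' ((N:ℝ) - x) N (by linarith) hN0]
    ring
  have hA := key e (by linarith) heN'
  have hB := key ((e:ℝ) - 1) (by linarith) (by linarith)
  -- the two slope terms
  have g1lo := phi_slope_nonneg (e:ℝ) he1'
  have g1hi := phi_slope_le (e:ℝ) N he1' heN'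
  have g2lo := phi_slope_nonneg ((N:ℝ) - e + 1) (by linarith)
  have g2hi := phi_slope_le ((N:ℝ) - e + 1) N (by linarith) (by linarith)
  have hΔ : Δ N = N * Real.log N - ((N:ℝ) - 1) * Real.log ((N:ℝ) - 1) := by
    unfold Δ
    rw [Real.log_div (by linarith) (by intro hh; rw [sub_eq_zero] at hh; linarith [hh])]
    ring
  have hrw1 : (N:ℝ) - ((e:ℝ) - 1) = (N:ℝ) - e + 1 := by ring
  have hrw2 : (N:ℝ) - e + 1 - 1 = (N:ℝ) - e := by ring
  rw [hA, hB, hrw1, hΔ]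
  rw [hrw2] at g2lo g2hi
  rw [abs_le]
  constructor <;> nlinarith [g1lo, g1hi, g2lo, g2hi]
end

section
/- Let N ≥ 2 be an integer. The maximum over integers e with 1 ≤ e ≤ N of |N·χ(e/N) − N·χ((e−1)/N)| equals Δ(N) = log N + (N−1)·log(N/(N−1)), and this maximum is attained at e = 1 and at e = N. -/
noncomputable def Hf (x : ℝ) : ℝ := x * Real.log x - (x - 1) * Real.log (x - 1)

lemma mul_log_div_aux (x N : ℝ) (hx : 0 ≤ x) (hN : 0 < N) :
    x * Real.log (x / N) = x * Real.log x - x * Real.log N := by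
  rcases eq_or_lt_of_le hx with h | h
  · simp [← h]
  · rw [Real.log_div (ne_of_gt h) (ne_of_gt hN)]; ring

lemma chi_formula (N e : ℝ) (hN : 0 < N) (h0 : 0 ≤ e) (h1 : e ≤ N) :
    N * chi (e / N) = e * Real.log e + (N - e) * Real.log (N - e) - N * Real.log N := by
  unfold chi
  have h2 : 1 - e / N = (N - e) / N := by field_simp
  rw [h2, mul_add, show N * (e / N * Real.log (e / N)) = e * Real.log (e / N) by
      field_simp,
    show N * ((N - e) / N * Real.log ((N - e) / N)) = (N - e) * Real.log ((N - e) / N) by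
      field_simp,
    mul_log_div_aux e N h0 hN, mul_log_div_aux (N - e) N (by linarith) hN]
  ring

lemma Hf_step (x : ℝ) (hx : 1 ≤ x) : Hf x ≤ Hf (x + 1) := by
  have c := Real.convexOn_mul_log
  have h2 := c.2 (show x - 1 ∈ Set.Ici (0:ℝ) by simp; linarith)
    (show x + 1 ∈ Set.Ici (0:ℝ) by simp; linarith)
    (by norm_num : (0:ℝ) ≤ 1/2) (by norm_num : (0:ℝ) ≤ 1/2) (by norm_num)
  have hxeq : (1/2 : ℝ) • (x - 1) + (1/2 : ℝ) • (x + 1) = x := by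
    simp only [smul_eq_mul]; ring
  rw [hxeq] at h2
  simp only [smul_eq_mul] at h2
  unfold Hf
  have h3 : x + 1 - 1 = x := by ring
  rw [h3]
  linarith

lemma Hf_mono (a b : ℕ) (ha : 1 ≤ a) (hab : a ≤ b) : Hf a ≤ Hf b := by
  induction b, hab using Nat.le_induction with
  | base => exact le_rfl
  | succ n hn ih =>
    refine le_trans ih ?_
    have := Hf_step n (by exact_mod_cast le_trans ha hn)
    push_cast
    linarith

lemma Hf_one : Hf 1 = 0 := by simp [Hf]

lemma diff_eq (N e : ℕ) (h1 : 1 ≤ e) (h2 : e ≤ N) :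
    (N : ℝ) * chi ((e : ℝ) / N) - (N : ℝ) * chi (((e : ℝ) - 1) / N)
      = Hf e - Hf ((N : ℝ) + 1 - e) := by
  have hN : (0:ℝ) < N := by exact_mod_cast (by omega : 0 < N)
  have he0 : (0:ℝ) ≤ (e:ℝ) := by positivity
  have heN : (e:ℝ) ≤ N := by exact_mod_cast h2
  have he1 : (0:ℝ) ≤ (e:ℝ) - 1 := by
    have : (1:ℝ) ≤ e := by exact_mod_cast h1
    linarith
  rw [chi_formula N e hN he0 heN, chi_formula N ((e:ℝ) - 1) hN he1 (by linarith)]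
  unfold Hf
  rw [show (N:ℝ) + 1 - e - 1 = N - e by ring,
    show (N:ℝ) - ((e:ℝ) - 1) = N + 1 - e by ring]
  ring

/-- the maximum over integers `1 ≤ e ≤ N` of
`|N·χ(e/N) − N·χ((e−1)/N)|` equals `Δ(N)`, attained at `e = 1` and `e = N`. -/
theorem hrg_sensitivity_max (N : ℕ) (hN : 2 ≤ N) :
    IsGreatest {x : ℝ | ∃ e : ℕ, 1 ≤ e ∧ e ≤ N ∧
        x = |(N : ℝ) * chi ((e : ℝ) / N) - (N : ℝ) * chi (((e : ℝ) - 1) / N)|}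
      (Δ N) ∧
    |(N : ℝ) * chi ((1 : ℝ) / N) - (N : ℝ) * chi (((1 : ℝ) - 1) / N)| = Δ N ∧
    |(N : ℝ) * chi ((N : ℝ) / N) - (N : ℝ) * chi (((N : ℝ) - 1) / N)| = Δ N := by
  have hN1 : (1:ℝ) < N := by exact_mod_cast (by omega : 1 < N)
  have hΔ : Δ N = Hf N := by
    unfold Δ Hf
    rw [Real.log_div (by linarith) (by linarith)]
    ring
  have hHfN : 0 ≤ Hf N := by
    have := Hf_mono 1 N le_rfl (by omega)
    push_cast at this
    rwa [Hf_one] at this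
  have key1 : |(N : ℝ) * chi ((1 : ℝ) / N) - (N : ℝ) * chi (((1 : ℝ) - 1) / N)| = Δ N := by
    have d1 := diff_eq N 1 le_rfl (by omega)
    push_cast at d1
    rw [d1, show (N:ℝ) + 1 - 1 = N by ring, Hf_one, hΔ, zero_sub, abs_neg,
      abs_of_nonneg hHfN]
  have keyN : |(N : ℝ) * chi ((N : ℝ) / N) - (N : ℝ) * chi (((N : ℝ) - 1) / N)| = Δ N := by
    have dN := diff_eq N N (by omega) le_rfl
    rw [dN, show (N:ℝ) + 1 - N = 1 by ring, Hf_one, hΔ, sub_zero, abs_of_nonneg hHfN]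
  refine ⟨⟨⟨1, le_rfl, by omega, ?_⟩, ?_⟩, key1, keyN⟩
  · push_cast
    exact key1.symm
  · rintro x ⟨e, he1, he2, rfl⟩
    rw [diff_eq N e he1 he2, hΔ, abs_le]
    have hc : ((N + 1 - e : ℕ) : ℝ) = (N:ℝ) + 1 - e := by
      rw [Nat.cast_sub (by omega : e ≤ N + 1)]
      push_cast
      ring
    have h1 : Hf ((N:ℝ) + 1 - e) ≤ Hf N := by
      rw [← hc]
      exact Hf_mono (N + 1 - e) N (by omega) (by omega)
    have h2 : 0 ≤ Hf ((N:ℝ) + 1 - e) := by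
      have := Hf_mono 1 (N + 1 - e) le_rfl (by omega)
      push_cast at this
      rw [Hf_one] at this
      rwa [hc] at this
    have h3 : Hf (e:ℝ) ≤ Hf N := Hf_mono e N he1 he2
    have h4 : 0 ≤ Hf (e:ℝ) := by
      have := Hf_mono 1 e le_rfl he1
      push_cast at this
      rwa [Hf_one] at this
    constructor <;> linarith
end
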